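/- Let z_0 ≤ z_1 ≤ ⋯ ≤ z_{n−1} be positive integers. Let t_n(x; w, −Z) denote the n-th generalized Gončarov polynomial associated with the zeta-type enumerators a_n(·; w) and the grid −Z = (−z_0, −z_1, …, −z_{n−1}). Then t_n(0; w, −Z) = Σ_{π ∈ Π_n} w(0̂, π) · PF_π(Z). (Theorem 3.5, first expression.) -/

import Mathlib

open Finset

variable {R : Type*} [CommRing R] [Algebra ℚ R]

/-- The zeta-type weight `w(0̂, π) = ∏_{B a block of π} w(|B|)`. -/
noncomputable def zetaWeight (w : ℕ → R) {n : ℕ} (π : Finpartition (univ : Finset (Fin n))) : R :=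
  ∏ B ∈ π.parts, w B.card

/-- The zeta-type enumerator `a_n(x; w)`. -/
noncomputable def aEnum (w : ℕ → R) (n : ℕ) (x : R) : R :=
  if n = 0 then 1 else
    ∑ π : Finpartition (univ : Finset (Fin n)), zetaWeight w π * x ^ π.parts.card

/-- `f : Fin n → ℕ` is a `z⃗`-parking function: all entries are positive, and for each
`i < n` at least `i + 1` of the entries are `≤ z i`. -/
def IsParking {n : ℕ} (z : ℕ → ℕ) (f : Fin n → ℕ) : Prop :=
  (∀ j, 1 ≤ f j) ∧
    ∀ i : Fin n, (i : ℕ) + 1 ≤ (univ.filter fun j => f j ≤ z (i : ℕ)).card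

/-- `PF_π(Z)`: the number of labelings of the blocks of `π` by positive integers whose
associated sequence (constant on each block) is a `z⃗`-parking function. -/
noncomputable def PFcount {n : ℕ} (π : Finpartition (univ : Finset (Fin n))) (z : ℕ → ℕ) : ℕ :=
  Nat.card { f : Fin n → ℕ //
    (∀ B ∈ π.parts, ∀ i ∈ B, ∀ j ∈ B, f i = f j) ∧ IsParking z f }

/-- The generalized Gončarov polynomials associated with the sequence `p` and the grid `Z`,
via the recurrence `t_n(x; Z) = p_n(x) - ∑_{i<n} C(n,i) p_{n-i}(z_i) t_i(x; Z)`
(with `t_0 = p_0 = 1`). -/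
noncomputable def gonc {S : Type*} [CommRing S] (p : ℕ → S → S) (Z : ℕ → S) (n : ℕ) (x : S) : S :=
  p n x - ∑ i ∈ (Finset.range n).attach,
    (n.choose i.1 : S) * p (n - i.1) (Z i.1) * gonc p Z i.1 x
termination_by n
decreasing_by exact Finset.mem_range.mp i.2

/-!
Unfolding the recurrence for `t_n(0; w, -Z)`, it suffices to show that
`N_i = ∑_π w(0̂, π) PF_π(Z)` solves the same triangular system,
`∑_{i ≤ m} C(m, i) a_{m-i}(-z_i; w) N_i = a_m(0; w)` for all `m ≤ n`.
Choosing the `i`-set `S ⊆ [m]` explicitly and expanding `a_{m-i}(-z_i)` over partitions of `Sᶜ`,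
the left side becomes a sum over partitions `T` of `[m]` together with a set `M` of marked blocks
(those of `Sᶜ`), weighted by `w(0̂, T) (-1)^|M|` times the number of labellings of the blocks of `T`
whose unmarked blocks park while each marked block gets a label in `[1, z_{|S|}]`.
For a fixed labelling, marking or unmarking a block with the largest label preserves validity
(this uses that `z` is increasing), so the signed count vanishes unless `T` has no blocks:
the left side is `∑_T w(0̂, T) 0^|T| = a_m(0; w)`.
-/

lemma sum_neg_one_pow_card_mul_eq_zero {ι : Type*} [Fintype ι] [DecidableEq ι]
    {f : Finset ι → ℤ} (b : ι) (hf : ∀ M, b ∉ M → f (insert b M) = f M) :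
    ∑ M : Finset ι, (-1) ^ #M * f M = 0 := by
  rw [← powerset_univ, ← insert_erase (mem_univ b), sum_powerset_insert (notMem_erase b univ),
    ← sum_add_distrib]
  refine sum_eq_zero fun M hM => ?_
  have hbM : b ∉ M := fun h => notMem_erase b univ (mem_powerset.1 hM h)
  rw [hf M hbM, card_insert_of_notMem hbM, pow_succ]
  ring

lemma Finset.sum_powerset_eq_sum_map_subtype {γ M : Type*} [DecidableEq γ] [AddCommMonoid M]
    (U : Finset γ) (f : Finset γ → M) :
    ∑ V ∈ U.powerset, f V = ∑ V : Finset U, f (V.map (Function.Embedding.subtype _)) := by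
  refine Eq.trans ?_
    (sum_map univ (mapEmbedding (Function.Embedding.subtype (· ∈ U))).toEmbedding f)
  congr 1
  ext V
  simp only [mem_powerset, mem_map, mem_univ, true_and, RelEmbedding.coe_toEmbedding,
    mapEmbedding_apply]
  refine ⟨fun h => ⟨V.subtype (· ∈ U), subtype_map_of_mem h⟩, ?_⟩
  rintro ⟨V, rfl⟩
  exact map_subtype_subset V

section BlockParking

variable {ι : Type*} (z : ℕ → ℕ) (c : ι → ℕ)

/-- Block `i` consists of `c i` cars that all prefer spot `g i`; this is the `z⃗`-parking
condition for the blocks in `U`. -/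
def ParksOn (U : Finset ι) (g : ι → ℕ) : Prop :=
  (∀ i ∈ U, 1 ≤ g i) ∧ ∀ k < ∑ i ∈ U, c i, k + 1 ≤ ∑ i ∈ U with g i ≤ z k, c i

noncomputable def parkingCount [Fintype ι] : ℕ := Nat.card {g : ι → ℕ // ParksOn z c univ g}

def IsMarkedParking [Fintype ι] [DecidableEq ι] (M : Finset ι) (g : ι → ℕ) : Prop :=
  ParksOn z c Mᶜ g ∧ ∀ i ∈ M, g i ∈ Icc 1 (z (∑ i ∈ Mᶜ, c i))

variable {z c} {g : ι → ℕ} {b : ι}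

lemma sum_filter_of_le (hb : ∀ i, g i ≤ g b) (V : Finset ι) {k : ℕ} (hk : g b ≤ z k) :
    ∑ i ∈ V with g i ≤ z k, c i = ∑ i ∈ V, c i := by
  rw [filter_true_of_mem fun i _ => (hb i).trans hk]

lemma sum_filter_erase_of_lt [DecidableEq ι] (V : Finset ι) {k : ℕ} (hk : z k < g b) :
    ∑ i ∈ V.erase b with g i ≤ z k, c i = ∑ i ∈ V with g i ≤ z k, c i := by
  rw [filter_erase, erase_eq_of_notMem (by simp [hk])]

lemma parksOn_subtype_iff {p : ι → Prop} [Fintype (Subtype p)] {U : Finset ι}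
    (hU : ∀ i, i ∈ U ↔ p i) (g : ι → ℕ) :
    ParksOn z (fun i : Subtype p => c i) univ (fun i => g i) ↔ ParksOn z c U g := by
  have hsum : ∀ q : ι → Prop, [DecidablePred q] →
      ∑ i ∈ (univ : Finset (Subtype p)) with q i.1, c i.1 = ∑ i ∈ U with q i, c i := by
    intro q _
    rw [sum_filter, sum_filter, sum_subtype U hU (fun i => if q i then c i else 0)]
  have htot := hsum (fun _ => True)
  simp only [filter_true] at htot
  simp only [ParksOn, mem_univ, true_implies, Subtype.forall, hU, htot]
  exact and_congr Iff.rfl (forall₂_congr fun k _ =>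
    Iff.of_eq (congrArg (k + 1 ≤ ·) (hsum fun i => g i ≤ z k)))

variable [Fintype ι]

lemma parkingCount_congr {κ : Type*} [Fintype κ] {c' : κ → ℕ} (e : ι ≃ κ)
    (he : ∀ i, c' (e i) = c i) : parkingCount z c = parkingCount z c' := by
  refine Nat.card_congr ((e.arrowCongr (Equiv.refl ℕ)).subtypeEquiv fun g => ?_)
  have hsum : ∀ q : ℕ → Prop, [DecidablePred q] →
      ∑ j with q (g (e.symm j)), c' j = ∑ i with q (g i), c i := by
    intro q _
    rw [sum_filter, sum_filter, ← e.sum_comp]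
    simp only [Equiv.symm_apply_apply, he]
  have htot := hsum (fun _ => True)
  simp only [filter_true] at htot
  simp only [ParksOn, mem_univ, true_implies, Equiv.arrowCongr_apply, Equiv.coe_refl,
    Function.comp_apply, id, htot]
  refine and_congr ⟨fun h j => h _, fun h i => by simpa using h (e i)⟩ (forall₂_congr fun k _ =>
    Iff.of_eq (congrArg (k + 1 ≤ ·) (hsum fun t => t ≤ z k)).symm)

variable [DecidableEq ι] {M : Finset ι}

lemma sum_add_le_sum_univ {V : Finset ι} {j : ι} (hj : j ∉ V) :
    ∑ i ∈ V, c i + c j ≤ ∑ i, c i := by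
  rw [add_comm, ← sum_insert hj]
  exact sum_le_sum_of_subset (subset_univ _)

lemma card_isMarkedParking (M : Finset ι) :
    Nat.card {g // IsMarkedParking z c M g}
      = parkingCount z (fun i : {i // i ∉ M} => c i) * z (∑ i ∈ Mᶜ, c i) ^ #M := by
  set u := ∑ i ∈ Mᶜ, c i
  let split : {g // IsMarkedParking z c M g} ≃
      {h : {i // i ∈ M} → ℕ // ∀ i, h i ∈ Icc 1 (z u)} ×
        {g : {i // i ∉ M} → ℕ // ParksOn z (fun i : {i // i ∉ M} => c i) univ g} :=
    ((Equiv.piEquivPiSubtypeProd (· ∈ M) fun _ => ℕ).subtypeEquiv fun g => by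
      change _ ↔ (∀ i : {i // i ∈ M}, g i ∈ Icc 1 (z u)) ∧
        ParksOn z (fun i : {i // i ∉ M} => c i) univ (fun i => g i)
      rw [IsMarkedParking, parksOn_subtype_iff (fun i => mem_compl), and_comm, Subtype.forall]
      ).trans Equiv.subtypeProdEquivProd
  rw [Nat.card_congr split, Nat.card_prod, mul_comm, parkingCount,
    Nat.card_congr Equiv.subtypePiEquivPi, Nat.card_pi]
  simp only [Nat.card_eq_finsetCard, Nat.card_Icc, add_tsub_cancel_right, prod_const, card_univ,
    Fintype.card_coe]

lemma IsMarkedParking.mark_max (h : IsMarkedParking z c M g) (hbM : b ∉ M)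
    (hb : ∀ i, g i ≤ g b) (hcb : 0 < c b) : IsMarkedParking z c (insert b M) g := by
  obtain ⟨⟨hpos, hpark⟩, hmarked⟩ := h
  have hbU : b ∈ Mᶜ := mem_compl.2 hbM
  have hu := sum_erase_add _ c hbU
  have hbound : g b ≤ z (∑ i ∈ Mᶜ.erase b, c i) := by
    by_contra! hlt
    have hk := hpark _ (by omega : ∑ i ∈ Mᶜ.erase b, c i < ∑ i ∈ Mᶜ, c i)
    rw [← sum_filter_erase_of_lt _ hlt] at hk
    have := sum_le_sum_of_subset (f := c)
      (filter_subset (fun i => g i ≤ z (∑ i ∈ Mᶜ.erase b, c i)) (Mᶜ.erase b))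
    omega
  rw [IsMarkedParking, compl_insert]
  refine ⟨⟨fun i hi => hpos i (mem_of_mem_erase hi), fun k hk => ?_⟩, fun i hi => ?_⟩
  · by_cases hkb : g b ≤ z k
    · rw [sum_filter_of_le hb _ hkb]
      omega
    · rw [sum_filter_erase_of_lt _ (not_le.1 hkb)]
      exact hpark k (by omega)
  · rcases mem_insert.1 hi with rfl | hiM
    · exact mem_Icc.2 ⟨hpos _ hbU, hbound⟩
    · exact mem_Icc.2 ⟨(mem_Icc.1 (hmarked i hiM)).1, (hb i).trans hbound⟩

lemma IsMarkedParking.unmark_max (hz : ∀ i j, i ≤ j → j < ∑ i, c i → z i ≤ z j)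
    (hc : ∀ i, 0 < c i) (h : IsMarkedParking z c (insert b M) g) (hbM : b ∉ M)
    (hb : ∀ i, g i ≤ g b) : IsMarkedParking z c M g := by
  rw [IsMarkedParking, compl_insert] at h
  obtain ⟨⟨hpos, hpark⟩, hmarked⟩ := h
  have hbU : b ∈ Mᶜ := mem_compl.2 hbM
  have hu := sum_erase_add _ c hbU
  obtain ⟨hb1, hbound⟩ := mem_Icc.1 (hmarked b (mem_insert_self b M))
  have hlt : ∀ i ∈ M, ∑ j ∈ Mᶜ, c j < ∑ j, c j := fun i hi => by
    have := sum_add_le_sum_univ (c := c) (notMem_compl.2 hi)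
    have := hc i
    omega
  refine ⟨⟨fun i hi => ?_, fun k hk => ?_⟩, fun i hi => ?_⟩
  · by_cases hib : i = b
    · exact hib ▸ hb1
    · exact hpos i (mem_erase.2 ⟨hib, hi⟩)
  · by_cases hkb : g b ≤ z k
    · rw [sum_filter_of_le hb _ hkb]
      omega
    · have hku : k < ∑ i ∈ Mᶜ.erase b, c i := by
        by_contra! hku
        have := sum_le_sum_of_subset (f := c) (subset_univ Mᶜ)
        exact hkb (hbound.trans (hz _ _ hku (by omega)))
      rw [← sum_filter_erase_of_lt _ (not_le.1 hkb)]
      exact hpark k hku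
  · refine mem_Icc.2 ⟨(mem_Icc.1 (hmarked i (mem_insert_of_mem hi))).1, ?_⟩
    exact (hb i).trans (hbound.trans (hz _ _ (by omega) (hlt i hi)))

lemma IsMarkedParking.apply_mem_Icc (hz : ∀ i j, i ≤ j → j < ∑ i, c i → z i ≤ z j)
    (hc : ∀ i, 0 < c i) (h : IsMarkedParking z c M g) (i : ι) :
    g i ∈ Icc 1 (z (∑ j, c j - 1)) := by
  obtain ⟨⟨hpos, hpark⟩, hmarked⟩ := h
  have hci := hc i
  by_cases hi : i ∈ M
  · have := sum_add_le_sum_univ (c := c) (notMem_compl.2 hi)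
    obtain ⟨hi1, hiu⟩ := mem_Icc.1 (hmarked i hi)
    exact mem_Icc.2 ⟨hi1, hiu.trans (hz _ _ (by omega) (by omega))⟩
  · have hiU : i ∈ Mᶜ := mem_compl.2 hi
    have hu := sum_erase_add _ c hiU
    have := sum_le_sum_of_subset (f := c) (subset_univ Mᶜ)
    refine mem_Icc.2 ⟨hpos i hiU, ?_⟩
    suffices g i ≤ z (∑ j ∈ Mᶜ, c j - 1) from this.trans (hz _ _ (by omega) (by omega))
    by_contra! hlt
    have hk := hpark _ (by omega : ∑ j ∈ Mᶜ, c j - 1 < ∑ j ∈ Mᶜ, c j)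
    rw [← sum_filter_erase_of_lt _ hlt] at hk
    have := sum_le_sum_of_subset (f := c)
      (filter_subset (fun j => g j ≤ z (∑ j ∈ Mᶜ, c j - 1)) (Mᶜ.erase i))
    omega

theorem sum_neg_one_pow_mul_card_isMarkedParking
    (hz : ∀ i j, i ≤ j → j < ∑ i, c i → z i ≤ z j) (hc : ∀ i, 0 < c i) :
    ∑ M : Finset ι, (-1) ^ #M * (Nat.card {g // IsMarkedParking z c M g} : ℤ)
      = 0 ^ Fintype.card ι := by
  classical
  rcases isEmpty_or_nonempty ι with hι | hι
  · have hP : ∀ M g, IsMarkedParking z c M g := fun M g =>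
      ⟨⟨fun i => isEmptyElim i, fun k hk => by simp [eq_empty_of_isEmpty Mᶜ] at hk⟩,
        fun i => isEmptyElim i⟩
    simp [Fintype.card_congr (Equiv.subtypeUnivEquiv (hP _)), eq_empty_of_isEmpty]
  set box := Fintype.piFinset fun _ : ι => Icc 1 (z (∑ j, c j - 1))
  have hcard : ∀ M,
      Nat.card {g // IsMarkedParking z c M g} = #{g ∈ box | IsMarkedParking z c M g} :=
    fun M => by
      rw [← Nat.card_eq_finsetCard]
      exact Nat.card_congr (Equiv.subtypeEquivRight fun g =>
        ⟨fun h => mem_filter.2 ⟨Fintype.mem_piFinset.2 (h.apply_mem_Icc hz hc), h⟩,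
          fun h => (mem_filter.1 h).2⟩)
  rw [zero_pow Fintype.card_ne_zero]
  simp_rw [hcard, card_filter, Nat.cast_sum, mul_sum]
  rw [sum_comm]
  refine sum_eq_zero fun g _ => ?_
  obtain ⟨b, hb⟩ := Finite.exists_max g
  refine sum_neg_one_pow_card_mul_eq_zero b fun M hbM => ?_
  congr 1
  exact if_congr ⟨fun h => h.unmark_max hz hc hbM hb, fun h => h.mark_max hbM hb (hc b)⟩ rfl rfl

end BlockParking

noncomputable def blocksParkingCount {β : Type*} (z : ℕ → ℕ) (U : Finset (Finset β)) : ℕ :=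
  parkingCount z (fun B : U => #B.1)

lemma sum_powerset_neg_one_pow_mul_blocksParkingCount {β : Type*} [DecidableEq β] (z : ℕ → ℕ)
    (T : Finset (Finset β)) (hT : ∀ B ∈ T, B.Nonempty)
    (hz : ∀ i j, i ≤ j → j < ∑ B ∈ T, #B → z i ≤ z j) :
    ∑ M ∈ T.powerset,
        (-1) ^ #M * ((blocksParkingCount z (T \ M) * z (∑ B ∈ T \ M, #B) ^ #M : ℕ) : ℤ)
      = 0 ^ #T := by
  have key := sum_neg_one_pow_mul_card_isMarkedParking (z := z) (c := fun B : T => #B.1)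
    (by simpa only [sum_coe_sort T card] using hz) fun B => card_pos.2 (hT B.1 B.2)
  simp only [card_isMarkedParking, Fintype.card_coe] at key
  rw [← key, sum_powerset_eq_sum_map_subtype]
  refine sum_congr rfl fun M _ => ?_
  have hcompl : Mᶜ.map (Function.Embedding.subtype _)
      = T \ M.map (Function.Embedding.subtype _) := by
    ext B
    simp only [mem_map, mem_compl, Function.Embedding.coe_subtype, mem_sdiff, Subtype.exists,
      exists_and_right, exists_eq_right, not_exists]
    exact ⟨fun ⟨h, hM⟩ => ⟨h, fun _ => hM⟩, fun ⟨h, hM⟩ => ⟨h, hM h⟩⟩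
  have hcount : blocksParkingCount z (Mᶜ.map (Function.Embedding.subtype _))
      = parkingCount z (fun B : {B : T // B ∉ M} => #B.1.1) :=
    (parkingCount_congr ((Equiv.subtypeEquivRight fun _ => mem_compl.symm).trans
      (Mᶜ.equivMap (Function.Embedding.subtype _))) fun _ => rfl).symm
  rw [card_map, ← hcompl, sum_map, hcount]
  rfl

section BlockLabelling

variable {α : Type*} [DecidableEq α]

lemma Finpartition.card_filter_part {s : Finset α} (π : Finpartition s) (p : Finset α → Prop)
    [DecidablePred p] : #{i ∈ s | p (π.part i)} = ∑ B ∈ π.parts with p B, #B := by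
  have : {i ∈ s | p (π.part i)} = (π.parts.filter p).biUnion id := by
    ext i
    simp only [mem_filter, mem_biUnion, id]
    constructor
    · rintro ⟨hi, hp⟩
      exact ⟨π.part i, ⟨π.part_mem.2 hi, hp⟩, π.mem_part_self.2 hi⟩
    · rintro ⟨B, ⟨hB, hp⟩, hiB⟩
      exact ⟨π.le hB hiB, (π.part_eq_of_mem hB hiB).symm ▸ hp⟩
  rw [this, card_biUnion (π.disjoint.subset (filter_subset _ _))]
  rfl

lemma Finpartition.sup_part_eq {s : Finset α} {π : Finpartition s} {f : α → ℕ}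
    (hf : ∀ B ∈ π.parts, ∀ i ∈ B, ∀ j ∈ B, f i = f j) {B : Finset α} (hB : B ∈ π.parts)
    {i : α} (hi : i ∈ B) : B.sup f = f i := by
  rw [sup_congr rfl fun j hj => hf B hB j hj i hi, sup_const ⟨i, hi⟩]

end BlockLabelling

lemma isParking_iff_parksOn {n : ℕ} (z : ℕ → ℕ) (π : Finpartition (univ : Finset (Fin n)))
    {f : Fin n → ℕ} (hf : ∀ B ∈ π.parts, ∀ i ∈ B, ∀ j ∈ B, f i = f j) :
    IsParking z f ↔ ParksOn z (fun B : π.parts => #B.1) univ (fun B => B.1.sup f) := by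
  have hpart : ∀ i, f i = (π.part i).sup f := fun i =>
    (π.sup_part_eq hf (π.part_mem.2 (mem_univ i)) (π.mem_part_self.2 (mem_univ i))).symm
  have hcount : ∀ k, #{i | f i ≤ z k} = ∑ B ∈ π.parts with B.sup f ≤ z k, #B := fun k => by
    simpa only [← hpart] using π.card_filter_part (fun B => B.sup f ≤ z k)
  rw [parksOn_subtype_iff (c := card) (U := π.parts) (fun _ => Iff.rfl) (fun B => B.sup f),
    ParksOn, IsParking, π.sum_card_parts, card_univ, Fintype.card_fin]
  refine and_congr ⟨fun h B hB => ?_, fun h i => ?_⟩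
    ⟨fun h k hk => hcount k ▸ h ⟨k, hk⟩, fun h i => (hcount i).symm ▸ h i i.2⟩
  · obtain ⟨i, hi⟩ := π.nonempty_of_mem_parts hB
    exact π.sup_part_eq hf hB hi ▸ h i
  · exact hpart i ▸ h _ (π.part_mem.2 (mem_univ i))

lemma PFcount_eq_parkingCount {n : ℕ} (π : Finpartition (univ : Finset (Fin n))) (z : ℕ → ℕ) :
    PFcount π z = parkingCount z (fun B : π.parts => #B.1) := by
  have hmem : ∀ i, π.part i ∈ π.parts := fun i => π.part_mem.2 (mem_univ i)
  have hconst : ∀ g : π.parts → ℕ, ∀ B ∈ π.parts, ∀ i ∈ B, ∀ j ∈ B,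
      g ⟨π.part i, hmem i⟩ = g ⟨π.part j, hmem j⟩ := fun g B hB i hi j hj => by
    simp only [π.part_eq_of_mem hB hi, π.part_eq_of_mem hB hj]
  have hsup : ∀ (g : π.parts → ℕ) (B : π.parts),
      B.1.sup (fun i => g ⟨π.part i, hmem i⟩) = g B := fun g B => by
    obtain ⟨i, hi⟩ := π.nonempty_of_mem_parts B.2
    rw [π.sup_part_eq (hconst g) B.2 hi]
    simp only [π.part_eq_of_mem B.2 hi]
  exact Nat.card_congr
    { toFun := fun f => ⟨fun B => B.1.sup f.1, (isParking_iff_parksOn z π f.2.1).1 f.2.2⟩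
      invFun := fun g => ⟨fun i => g.1 ⟨π.part i, hmem i⟩, hconst g.1,
        (isParking_iff_parksOn z π (hconst g.1)).2 (by simpa only [hsup] using g.2)⟩
      left_inv := fun f => Subtype.ext <| funext fun i =>
        π.sup_part_eq f.2.1 (hmem i) (π.mem_part_self.2 (mem_univ i))
      right_inv := fun g => Subtype.ext <| funext (hsup g.1) }

section Relabel

variable {α β : Type*} [DecidableEq α] [DecidableEq β]

lemma Finset.supIndep_map_mapEmbedding_iff (e : α ↪ β) (U : Finset (Finset α)) :
    (U.map (mapEmbedding e).toEmbedding).SupIndep id ↔ U.SupIndep id := by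
  simp [supIndep_iff_pairwiseDisjoint, Set.PairwiseDisjoint, Set.Pairwise, Function.onFun]

lemma Finset.sup_map_mapEmbedding (e : α ↪ β) (U : Finset (Finset α)) :
    (U.map (mapEmbedding e).toEmbedding).sup id = (U.sup id).map e := by
  ext x
  simp only [mem_sup, mem_map, id, RelEmbedding.coe_toEmbedding, mapEmbedding_apply]
  constructor
  · rintro ⟨_, ⟨A, hA, rfl⟩, hx⟩
    obtain ⟨a, ha, rfl⟩ := mem_map.1 hx
    exact ⟨a, ⟨A, hA, ha⟩, rfl⟩
  · rintro ⟨a, ⟨A, hA, ha⟩, rfl⟩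
    exact ⟨_, ⟨A, hA, rfl⟩, mem_map_of_mem e ha⟩

def Finpartition.embed (e : α ↪ β) {s : Finset α} (P : Finpartition s) :
    Finpartition (s.map e) where
  parts := P.parts.map (mapEmbedding e).toEmbedding
  supIndep := (supIndep_map_mapEmbedding_iff e _).2 P.supIndep
  sup_parts := by rw [sup_map_mapEmbedding, P.sup_parts]
  bot_notMem := by simp

lemma Finpartition.embed_bijective (e : α ↪ β) (s : Finset α) :
    Function.Bijective (embed e (s := s)) := by
  refine ⟨fun P Q h => Finpartition.ext (map_injective _ (congrArg parts h)), fun Q => ?_⟩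
  set U := Q.parts.preimage (Finset.map e) (map_injective e).injOn
  have hU : U.map (mapEmbedding e).toEmbedding = Q.parts := by
    ext B
    simp only [U, mem_map, mem_preimage, RelEmbedding.coe_toEmbedding, mapEmbedding_apply]
    refine ⟨fun ⟨A, hA, hAB⟩ => hAB ▸ hA, fun hB => ?_⟩
    obtain ⟨A, -, rfl⟩ := subset_map_iff.1 (Q.le hB)
    exact ⟨A, hB, rfl⟩
  refine ⟨⟨U, (supIndep_map_mapEmbedding_iff e U).1 (hU ▸ Q.supIndep),
    map_injective e (by rw [← sup_map_mapEmbedding, hU, Q.sup_parts]), fun h => ?_⟩,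
    Finpartition.ext hU⟩
  exact Q.bot_notMem (hU ▸ mem_map_of_mem _ h)

lemma Finpartition.sum_embed {M : Type*} [AddCommMonoid M] (e : α ↪ β) (s : Finset α)
    (F : Finset (Finset β) → M) :
    ∑ Q : Finpartition (s.map e), F Q.parts
      = ∑ P : Finpartition s, F (P.parts.map (mapEmbedding e).toEmbedding) :=
  (Fintype.sum_bijective _ (embed_bijective e s) _ _ fun _ => rfl).symm

end Relabel

lemma blocksParkingCount_map {α β : Type*} (z : ℕ → ℕ) (e : α ↪ β) (U : Finset (Finset α)) :
    blocksParkingCount z (U.map (mapEmbedding e).toEmbedding) = blocksParkingCount z U :=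
  (parkingCount_congr (U.equivMap _) fun _ => card_map e).symm

section Splitting

variable {α : Type*} [DecidableEq α] {s t : Finset α}

def Finpartition.disjUnion (P : Finpartition s) (Q : Finpartition t) (h : Disjoint s t) :
    Finpartition (s ∪ t) where
  parts := P.parts ∪ Q.parts
  supIndep := by
    rw [supIndep_iff_pairwiseDisjoint, coe_union, Set.pairwiseDisjoint_union]
    exact ⟨P.disjoint, Q.disjoint, fun A hA B hB _ => h.mono (P.le hA) (Q.le hB)⟩
  sup_parts := by rw [sup_union, P.sup_parts, Q.sup_parts, sup_eq_union]
  bot_notMem := by simp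

lemma Finpartition.disjoint_parts (P : Finpartition s) (Q : Finpartition t) (h : Disjoint s t) :
    Disjoint P.parts Q.parts :=
  disjoint_left.2 fun _ hP hQ => P.ne_bot hP (disjoint_self.1 (h.mono (P.le hP) (Q.le hQ)))

variable [Fintype α]

lemma Finpartition.sup_eq_compl_sup_sdiff (T : Finpartition (univ : Finset α))
    {M : Finset (Finset α)} (hM : M ⊆ T.parts) : M.sup id = ((T.parts \ M).sup id)ᶜ := by
  refine (IsCompl.of_eq ?_ ?_).compl_eq.symm
  · exact (T.supIndep.disjoint_sup_sup sdiff_subset hM sdiff_disjoint).eq_bot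
  · rw [← sup_union, sdiff_union_of_subset hM, T.sup_parts, top_eq_univ]

lemma Finpartition.sum_compl_eq_sum_powerset_parts {M : Type*} [AddCommMonoid M]
    (F : Finset (Finset α) → Finset (Finset α) → M) :
    ∑ S : Finset α, ∑ P : Finpartition S, ∑ Q : Finpartition Sᶜ, F P.parts Q.parts
      = ∑ T : Finpartition (univ : Finset α), ∑ M ∈ T.parts.powerset, F (T.parts \ M) M := by
  set X := (univ : Finset (Finpartition (univ : Finset α) × Finset (Finset α))).filter
    fun x => x.2 ⊆ x.1.parts
  rw [← sum_finset_product X univ (fun T => T.parts.powerset) (by simp [X])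
      (f := fun x => F (x.1.parts \ x.2) x.2),
    ← sum_fiberwise X (fun x => (x.1.parts \ x.2).sup id)]
  refine sum_congr rfl fun S _ => ?_
  rw [← Fintype.sum_prod_type']
  have hPQ : ∀ PQ : Finpartition S × Finpartition Sᶜ,
      (PQ.1.parts ∪ PQ.2.parts) \ PQ.2.parts = PQ.1.parts := fun PQ =>
    union_sdiff_cancel_right (disjoint_parts _ _ disjoint_compl_right)
  refine sum_bij'
    (fun PQ _ => ((PQ.1.disjUnion PQ.2 disjoint_compl_right).copy (union_compl S), PQ.2.parts))
    (fun x hx => (x.1.ofSubset sdiff_subset (mem_filter.1 hx).2,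
      x.1.ofSubset (mem_filter.1 (mem_filter.1 hx).1).2
        (by rw [sup_eq_compl_sup_sdiff _ (mem_filter.1 (mem_filter.1 hx).1).2,
          (mem_filter.1 hx).2])))
    (fun PQ _ => ?_) (fun _ _ => mem_univ _) (fun PQ _ => ?_) (fun x hx => ?_)
    (fun PQ _ => congrArg (F · _) (hPQ PQ).symm)
  · exact mem_filter.2 ⟨mem_filter.2 ⟨mem_univ _, subset_union_right⟩,
      (congrArg (sup · id) (hPQ PQ)).trans PQ.1.sup_parts⟩
  · exact Prod.ext (Finpartition.ext (hPQ PQ)) (Finpartition.ext rfl)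
  · exact Prod.ext
      (Finpartition.ext (sdiff_union_of_subset (mem_filter.1 (mem_filter.1 hx).1).2)) rfl

end Splitting

section Enumerators

variable {A : Type*} [CommRing A] (w : ℕ → A) (z : ℕ → ℕ)

lemma aEnum_eq_sum (m : ℕ) (x : A) :
    aEnum w m x = ∑ π : Finpartition (univ : Finset (Fin m)), zetaWeight w π * x ^ #π.parts := by
  rcases m with _ | m
  · have hparts : ∀ π : Finpartition (univ : Finset (Fin 0)), π.parts = ∅ :=
      fun π => π.parts_eq_empty_iff.2 (by simp)
    have : Subsingleton (Finpartition (univ : Finset (Fin 0))) :=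
      ⟨fun π π' => Finpartition.ext ((hparts π).trans (hparts π').symm)⟩
    rw [aEnum, if_pos rfl, Fintype.sum_subsingleton _ ⊥, zetaWeight, hparts]
    simp
  · rw [aEnum, if_neg m.succ_ne_zero]

variable {β : Type*} [LinearOrder β]

lemma sum_weight_mul_blocksParkingCount (S : Finset β) :
    ∑ P : Finpartition S, (∏ B ∈ P.parts, w #B) * (blocksParkingCount z P.parts : A)
      = ∑ π : Finpartition (univ : Finset (Fin #S)), zetaWeight w π * (PFcount π z : A) := by
  conv_lhs => rw [← map_orderEmbOfFin_univ S rfl]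
  rw [Finpartition.sum_embed _ _ fun U => (∏ B ∈ U, w #B) * (blocksParkingCount z U : A)]
  refine sum_congr rfl fun π _ => ?_
  rw [prod_map, blocksParkingCount_map, PFcount_eq_parkingCount]
  simp [zetaWeight, blocksParkingCount]

lemma sum_weight_mul_pow_card (S : Finset β) (x : A) :
    ∑ Q : Finpartition S, (∏ B ∈ Q.parts, w #B) * x ^ #Q.parts = aEnum w #S x := by
  conv_lhs => rw [← map_orderEmbOfFin_univ S rfl]
  rw [Finpartition.sum_embed _ _ fun U => (∏ B ∈ U, w #B) * x ^ #U, aEnum_eq_sum]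
  simp [zetaWeight]

theorem sum_choose_mul_aEnum_mul_sum_PFcount {m : ℕ} (hz : ∀ i j, i ≤ j → j < m → z i ≤ z j) :
    ∑ i ∈ range (m + 1), (m.choose i : A) * aEnum w (m - i) (-(z i : A)) *
        ∑ π : Finpartition (univ : Finset (Fin i)), zetaWeight w π * (PFcount π z : A)
      = aEnum w m 0 := by
  set N : ℕ → A := fun i =>
    ∑ π : Finpartition (univ : Finset (Fin i)), zetaWeight w π * (PFcount π z : A)
  set F : Finset (Finset (Fin m)) → Finset (Finset (Fin m)) → A := fun U V =>
    (∏ B ∈ U, w #B) * blocksParkingCount z U * ((∏ B ∈ V, w #B) * (-(z (∑ B ∈ U, #B) : A)) ^ #V)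
  have hsplit : ∀ S : Finset (Fin m),
      ∑ P : Finpartition S, ∑ Q : Finpartition Sᶜ, F P.parts Q.parts
        = N #S * aEnum w (m - #S) (-(z #S : A)) := fun S => by
    rw [show m - #S = #Sᶜ by rw [card_compl, Fintype.card_fin], ← sum_weight_mul_pow_card,
      show N #S = _ from (sum_weight_mul_blocksParkingCount w z S).symm, sum_mul_sum]
    simp only [F, Finpartition.sum_card_parts]
  calc _ = ∑ S : Finset (Fin m), ∑ P : Finpartition S, ∑ Q : Finpartition Sᶜ,
        F P.parts Q.parts := by
        rw [sum_congr rfl fun S _ => hsplit S, ← powerset_univ,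
          sum_powerset_apply_card (fun i => N i * aEnum w (m - i) (-(z i : A))), card_univ,
          Fintype.card_fin]
        exact sum_congr rfl fun i _ => by rw [nsmul_eq_mul]; ring
    _ = ∑ T : Finpartition (univ : Finset (Fin m)), ∑ M ∈ T.parts.powerset, F (T.parts \ M) M :=
        Finpartition.sum_compl_eq_sum_powerset_parts F
    _ = ∑ T : Finpartition (univ : Finset (Fin m)), zetaWeight w T * 0 ^ #T.parts := by
        refine sum_congr rfl fun T _ => ?_
        have hsign := congrArg (Int.cast : ℤ → A)
          (sum_powerset_neg_one_pow_mul_blocksParkingCount z T.parts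
            (fun _ hB => T.nonempty_of_mem_parts hB)
            (by rwa [T.sum_card_parts, card_univ, Fintype.card_fin]))
        push_cast at hsign
        rw [zetaWeight, ← hsign, mul_sum]
        refine sum_congr rfl fun M hM => ?_
        rw [← prod_sdiff (mem_powerset.1 hM), neg_pow]
        ring
    _ = aEnum w m 0 := (aEnum_eq_sum w m 0).symm

end Enumerators

lemma gonc_eq_of_forall_sum_eq {S : Type*} [CommRing S] {p : ℕ → S → S} {Z : ℕ → S} {x : S}
    {q : ℕ → S} (hp : ∀ y, p 0 y = 1) {n : ℕ}
    (hq : ∀ m ≤ n, ∑ i ∈ range (m + 1), (m.choose i : S) * p (m - i) (Z i) * q i = p m x) :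
    gonc p Z n x = q n := by
  induction n using Nat.strong_induction_on with
  | _ n ih =>
    have hn := hq n le_rfl
    rw [sum_range_succ, Nat.choose_self, Nat.sub_self, hp, Nat.cast_one, one_mul, one_mul] at hn
    rw [gonc, sum_attach (range n) fun i => (n.choose i : S) * p (n - i) (Z i) * gonc p Z i x,
      sum_congr rfl fun i hi => by
        rw [ih i (mem_range.1 hi) fun m hm => hq m (hm.trans (mem_range.1 hi).le)], ← hn]
    ring

theorem goncarov_partition_lattice_zero (w : ℕ → R) (n : ℕ) (z : ℕ → ℕ)
    (hmono : ∀ i j, i ≤ j → j < n → z i ≤ z j) :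
    gonc (aEnum w) (fun i => -(z i : R)) n (0 : R)
      = ∑ π : Finpartition (univ : Finset (Fin n)), zetaWeight w π * (PFcount π z : R) :=
  gonc_eq_of_forall_sum_eq (fun _ => if_pos rfl) fun _ hm =>
    sum_choose_mul_aEnum_mul_sum_PFcount w z fun i j hij hj => hmono i j hij (hj.trans_le hm)
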